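/- Over {a<b<c}, let w be any word such that the projection of w onto {a,c} contains a c^n a as a factor for some n ≥ 2. Then w is M-equivalent to a word containing ac or ca as a (contiguous) factor. -/

import Mathlib

open List

/-- Number of occurrences of `v` as a scattered subsequence of `w`. -/
def scount {α : Type*} [DecidableEq α] (w v : List α) : ℕ := w.sublists.count v

/-- The ternary ordered alphabet {a < b < c}. -/
inductive ABC | a | b | c
deriving DecidableEq

open ABC

/-- M-equivalence over the ordered alphabet {a < b < c}. -/
def MEq3 (w w' : List ABC) : Prop :=
  scount w [a] = scount w' [a] ∧ scount w [b] = scount w' [b] ∧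
  scount w [c] = scount w' [c] ∧ scount w [a, b] = scount w' [a, b] ∧
  scount w [b, c] = scount w' [b, c] ∧ scount w [a, b, c] = scount w' [a, b, c]

/-- Projection onto {a, c}: erase all b's. -/
def projAC (w : List ABC) : List ABC := w.filter (· ≠ b)

abbrev A (k : ℕ) : List ABC := List.replicate k a
abbrev B (k : ℕ) : List ABC := List.replicate k b
abbrev C (k : ℕ) : List ABC := List.replicate k c

/-!
Cut `w` as `u a m a v`, where `m` is the factor between the two `a`'s of the pattern: it has no `a`
and `n` letters `c`. The six statistics of `MEq3` behave additively-multiplicatively under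
concatenation, so `MEq3` is a congruence, and on `a`-free words it only sees the number `S` of
`b`'s, the number of `c`'s and the number `T ≤ S n` of subsequences `bc`. Appending a `c` adds `S`
to `T`, prepending one adds nothing. So if `T ≤ S (n - 1)` we replace `m` by `c` followed by an
`a`-free word with profile `(S, n - 1, T)`, and otherwise (then `T > S (n - 1) ≥ S` as `n ≥ 2`) by
an `a`-free word with profile `(S, n - 1, T - S)` followed by `c`. The same dichotomy, started
from `b^T c b^(S - T)`, shows that every profile with `T ≤ S k` and `k ≥ 1` is realised.
-/

section Scount

variable {α : Type*} [DecidableEq α]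

theorem scount_eq_count_sublists' (w v : List α) : scount w v = w.sublists'.count v :=
  (sublists_perm_sublists' w).count_eq v

theorem scount_eq_zero_of_not_sublist {w v : List α} (h : ¬ v <+ w) : scount w v = 0 :=
  count_eq_zero.mpr (mt mem_sublists.mp h)

theorem scount_eq_zero_of_count_eq_zero {w v : List α} {p : α} (hp : p ∈ v) (h : w.count p = 0) :
    scount w v = 0 :=
  scount_eq_zero_of_not_sublist fun hs => count_eq_zero.mp h (hs.subset hp)

@[simp]
theorem scount_nil_right (w : List α) : scount w [] = 1 := by
  rw [scount_eq_count_sublists']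
  induction w with
  | nil => rfl
  | cons x w ih =>
    rw [sublists'_cons, count_append, ih, count_eq_zero.mpr (by simp)]

@[simp]
theorem scount_nil_cons (y : α) (v : List α) : scount [] (y :: v) = 0 :=
  scount_eq_zero_of_not_sublist (by simp)

theorem scount_cons (x : α) (w : List α) (y : α) (v : List α) :
    scount (x :: w) (y :: v) = scount w (y :: v) + if x = y then scount w v else 0 := by
  simp only [scount_eq_count_sublists', sublists'_cons, count_append]
  split_ifs with h
  · subst h
    rw [count_map_of_injective _ _ cons_injective]
  · rw [add_zero, add_eq_left, count_eq_zero]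
    intro hmem
    obtain ⟨s, -, hs⟩ := mem_map.mp hmem
    exact h (cons.inj hs).1

@[simp]
theorem scount_singleton (w : List α) (p : α) : scount w [p] = w.count p := by
  induction w with
  | nil => simp
  | cons x w ih => by_cases h : x = p <;> simp [scount_cons, ih, h]

theorem scount_append_pair (w₁ w₂ : List α) (p q : α) :
    scount (w₁ ++ w₂) [p, q] =
      scount w₁ [p, q] + scount w₂ [p, q] + w₁.count p * w₂.count q := by
  induction w₁ with
  | nil => simp
  | cons x w₁ ih =>
    by_cases h : x = p <;> simp [scount_cons, ih, h]; ring

theorem scount_append_triple (w₁ w₂ : List α) (p q r : α) :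
    scount (w₁ ++ w₂) [p, q, r] =
      scount w₁ [p, q, r] + scount w₂ [p, q, r] +
        scount w₁ [p, q] * w₂.count r + w₁.count p * scount w₂ [q, r] := by
  induction w₁ with
  | nil => simp
  | cons x w₁ ih =>
    by_cases h : x = p <;> simp [scount_cons, ih, scount_append_pair, h]; ring

theorem scount_pair_le (w : List α) (p q : α) : scount w [p, q] ≤ w.count p * w.count q := by
  induction w with
  | nil => simp
  | cons x w ih =>
    rw [scount_cons, count_cons, count_cons, scount_singleton]
    split_ifs <;> simp_all <;> nlinarith

end Scount

theorem MEq3.refl (w : List ABC) : MEq3 w w := ⟨rfl, rfl, rfl, rfl, rfl, rfl⟩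

theorem MEq3.append {w₁ w₂ w₁' w₂' : List ABC} (h₁ : MEq3 w₁ w₁') (h₂ : MEq3 w₂ w₂') :
    MEq3 (w₁ ++ w₂) (w₁' ++ w₂') := by
  simp only [MEq3, scount_singleton, scount_append_pair, scount_append_triple,
    count_append] at h₁ h₂ ⊢
  obtain ⟨ha₁, hb₁, hc₁, hab₁, hbc₁, habc₁⟩ := h₁
  obtain ⟨ha₂, hb₂, hc₂, hab₂, hbc₂, habc₂⟩ := h₂
  simp only [*, and_self]

theorem MEq3.append_infix {m m' : List ABC} (h : MEq3 m m') (u v : List ABC) :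
    MEq3 (u ++ m ++ v) (u ++ m' ++ v) :=
  ((MEq3.refl u).append h).append (MEq3.refl v)

theorem count_projAC {x : ABC} (hx : x ≠ b) (w : List ABC) : (projAC w).count x = w.count x :=
  count_filter (by simpa using hx)

theorem exists_eq_append_a_append_a {w : List ABC} {n : ℕ}
    (h : [a] ++ C n ++ [a] <:+: projAC w) :
    ∃ u m v, w = u ++ [a] ++ m ++ [a] ++ v ∧ projAC m = C n := by
  obtain ⟨l, ⟨s, t, rfl⟩, hl⟩ := infix_filter_iff.mp h
  have hl' : l.filter (· ≠ b) = a :: (C n ++ [a]) := by rw [← hl]; simp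
  obtain ⟨l₁, l₂, rfl, -, -, hl₂⟩ := filter_eq_cons_iff.mp hl'
  obtain ⟨m, r, rfl, hm, hr⟩ := filter_eq_append_iff.mp hl₂
  obtain ⟨r₁, r₂, rfl, hr₁, -, -⟩ := filter_eq_cons_iff.mp hr
  refine ⟨s ++ l₁, m ++ r₁, r₂ ++ t, by simp, ?_⟩
  rw [projAC, filter_append, hm, filter_eq_nil_iff.mpr hr₁, append_nil]

def bcProfile (m : List ABC) : ℕ × ℕ × ℕ × ℕ :=
  (m.count a, m.count b, m.count c, scount m [b, c])

theorem mEq3_of_bcProfile_eq {m m' : List ABC} (h : bcProfile m = bcProfile m')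
    (ha : m.count a = 0) : MEq3 m m' := by
  simp only [bcProfile, Prod.mk.injEq] at h
  obtain ⟨ha', hb, hc, hbc⟩ := h
  have ha'' : m'.count a = 0 := ha' ▸ ha
  refine ⟨by simp [ha'], by simp [hb], by simp [hc], ?_, hbc, ?_⟩ <;>
    rw [scount_eq_zero_of_count_eq_zero (mem_cons_self ..) ha,
      scount_eq_zero_of_count_eq_zero (mem_cons_self ..) ha'']

theorem exists_bcProfile_edge_of_forall {S k T : ℕ}
    (ih : ∀ T ≤ S * (k + 1), ∃ m, bcProfile m = (0, S, k + 1, T)) (hT : T ≤ S * (k + 2)) :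
    ∃ m, bcProfile m = (0, S, k + 2, T) ∧ ((∃ m₀, m = c :: m₀) ∨ ∃ m₀, m = m₀ ++ [c]) := by
  by_cases hle : T ≤ S * (k + 1)
  · obtain ⟨m, hm⟩ := ih T hle
    simp only [bcProfile, Prod.mk.injEq] at hm
    exact ⟨c :: m, by simp [bcProfile, scount_cons, hm], Or.inl ⟨m, rfl⟩⟩
  · obtain ⟨m, hm⟩ := ih (T - S) (by rw [Nat.sub_le_iff_le_add]; linarith)
    simp only [bcProfile, Prod.mk.injEq] at hm
    refine ⟨m ++ [c], ?_, Or.inr ⟨m, rfl⟩⟩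
    have hST : S ≤ T := by nlinarith
    simp [bcProfile, scount_append_pair, scount_cons, hm]
    omega

theorem exists_bcProfile (S k T : ℕ) (hT : T ≤ S * (k + 1)) :
    ∃ m, bcProfile m = (0, S, k + 1, T) := by
  induction k generalizing T with
  | zero =>
    have hB (j : ℕ) : scount (B j) [b, c] = 0 :=
      scount_eq_zero_of_count_eq_zero (p := c) (by simp) (by simp [count_replicate])
    refine ⟨B T ++ [c] ++ B (S - T), ?_⟩
    simp [bcProfile, scount_append_pair, scount_cons, count_replicate, hB]
    omega
  | succ k ih => exact (exists_bcProfile_edge_of_forall ih hT).imp fun _ h => h.1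

theorem exists_mEq3_edge {m : List ABC} (ha : m.count a = 0) (hc : 2 ≤ m.count c) :
    ∃ m', MEq3 m m' ∧ ((∃ m₀, m' = c :: m₀) ∨ ∃ m₀, m' = m₀ ++ [c]) := by
  obtain ⟨k, hk⟩ : ∃ k, m.count c = k + 2 := ⟨_, (Nat.sub_add_cancel hc).symm⟩
  have hT : scount m [b, c] ≤ m.count b * (k + 2) := hk ▸ scount_pair_le m b c
  obtain ⟨m', hm', hedge⟩ := exists_bcProfile_edge_of_forall (exists_bcProfile _ k) hT
  exact ⟨m', mEq3_of_bcProfile_eq (by rw [hm', bcProfile, ha, hk]) ha, hedge⟩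

theorem stmt_9 (w : List ABC) (n : ℕ) (hn : 2 ≤ n)
    (hfac : ([a] ++ C n ++ [a]) <:+: projAC w) :
    ∃ w' : List ABC, MEq3 w w' ∧ ([a, c] <:+: w' ∨ [c, a] <:+: w') := by
  obtain ⟨u, m, v, rfl, hm⟩ := exists_eq_append_a_append_a hfac
  have ha : m.count a = 0 := by rw [← count_projAC (by decide), hm]; simp [count_replicate]
  have hc : m.count c = n := by rw [← count_projAC (by decide), hm, count_replicate_self]
  obtain ⟨m', hmm', hedge⟩ := exists_mEq3_edge ha (hc ▸ hn)
  refine ⟨u ++ [a] ++ m' ++ [a] ++ v, ?_, ?_⟩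
  · simpa only [append_assoc] using hmm'.append_infix (u ++ [a]) ([a] ++ v)
  · rcases hedge with ⟨m₀, rfl⟩ | ⟨m₀, rfl⟩
    · exact Or.inl ⟨u, m₀ ++ [a] ++ v, by simp⟩
    · exact Or.inr ⟨u ++ [a] ++ m₀, v, by simp⟩
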